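/- arXiv:1601.01546 — 3 statements merged into one kernel-verified Lean document; each statement's English description precedes it below -/
import Mathlib

section
/- Branching bisimilarity is an equivalence relation on labelled transition systems: it is reflexive, symmetric, and transitive. -/
/-- A labelled transition system over actions `A` together with the silent action `τ`
(represented by `none`). -/
structure LTS (A : Type) where
  S : Type
  tr : S → Option A → S → Prop
  init : S

namespace LTS

variable {A : Type}

/-- Reflexive-transitive closure of τ-steps, `s ⇒ t`. -/
def Star (T : LTS A) : T.S → T.S → Prop :=
  Relation.ReflTransGen (fun s t => T.tr s none t)

/-- `s →(a) t`: either `s →a t`, or `a = τ` and `s = t`. -/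
def OptStep (T : LTS A) (s : T.S) (a : Option A) (t : T.S) : Prop :=
  T.tr s a t ∨ (a = none ∧ s = t)

/-- `R` is a branching bisimulation from `T₁` to `T₂`. -/
def IsBB (T₁ T₂ : LTS A) (R : T₁.S → T₂.S → Prop) : Prop :=
  (∀ s₁ s₂, R s₁ s₂ → ∀ a s₁', T₁.tr s₁ a s₁' →
    ∃ s₂'' s₂', T₂.Star s₂ s₂'' ∧ T₂.OptStep s₂'' a s₂' ∧ R s₁ s₂'' ∧ R s₁' s₂') ∧
  (∀ s₁ s₂, R s₁ s₂ → ∀ a s₂', T₂.tr s₂ a s₂' →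
    ∃ s₁'' s₁', T₁.Star s₁ s₁'' ∧ T₁.OptStep s₁'' a s₁' ∧ R s₁'' s₂ ∧ R s₁' s₂')

/-- `T₁` and `T₂` are branching bisimilar. -/
def BBisim (T₁ T₂ : LTS A) : Prop :=
  ∃ R, IsBB T₁ T₂ R ∧ R T₁.init T₂.init

end LTS

namespace LTS

variable {A : Type}

/-- A `⇒` move on the left can be matched on the right. -/
lemma star_match_fwd {T₁ T₂ : LTS A} {R : T₁.S → T₂.S → Prop} (h : IsBB T₁ T₂ R)
    {s₁ t₁ : T₁.S} (hst : T₁.Star s₁ t₁) : ∀ s₂ : T₂.S, R s₁ s₂ →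
    ∃ t₂, T₂.Star s₂ t₂ ∧ R t₁ t₂ := by
  induction hst with
  | refl => exact fun s₂ hr => ⟨s₂, Relation.ReflTransGen.refl, hr⟩
  | tail _ hbc ih =>
    intro s₂ hr
    obtain ⟨t, hst, hrt⟩ := ih s₂ hr
    obtain ⟨u'', u', hsu, hstep, _, hr'⟩ := h.1 _ _ hrt _ _ hbc
    refine ⟨u', hst.trans (hsu.trans ?_), hr'⟩
    rcases hstep with h' | ⟨_, rfl⟩
    · exact Relation.ReflTransGen.single h'
    · exact Relation.ReflTransGen.refl

/-- A `⇒` move on the right can be matched on the left. -/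
lemma star_match_bwd {T₁ T₂ : LTS A} {R : T₁.S → T₂.S → Prop} (h : IsBB T₁ T₂ R)
    {s₂ t₂ : T₂.S} (hst : T₂.Star s₂ t₂) : ∀ s₁ : T₁.S, R s₁ s₂ →
    ∃ t₁, T₁.Star s₁ t₁ ∧ R t₁ t₂ := by
  induction hst with
  | refl => exact fun s₁ hr => ⟨s₁, Relation.ReflTransGen.refl, hr⟩
  | tail _ hbc ih =>
    intro s₁ hr
    obtain ⟨t, hst, hrt⟩ := ih s₁ hr
    obtain ⟨u'', u', hsu, hstep, _, hr'⟩ := h.2 _ _ hrt _ _ hbc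
    refine ⟨u', hst.trans (hsu.trans ?_), hr'⟩
    rcases hstep with h' | ⟨_, rfl⟩
    · exact Relation.ReflTransGen.single h'
    · exact Relation.ReflTransGen.refl

end LTS

theorem stmt_3 {A : Type} :
    (∀ T : LTS A, LTS.BBisim T T) ∧
    (∀ T₁ T₂ : LTS A, LTS.BBisim T₁ T₂ → LTS.BBisim T₂ T₁) ∧
    (∀ T₁ T₂ T₃ : LTS A, LTS.BBisim T₁ T₂ → LTS.BBisim T₂ T₃ → LTS.BBisim T₁ T₃) := by
  refine ⟨?_, ?_, ?_⟩
  · intro T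
    refine ⟨Eq, ⟨?_, ?_⟩, rfl⟩
    · rintro s₁ s₂ rfl a s₁' h
      exact ⟨s₁, s₁', Relation.ReflTransGen.refl, Or.inl h, rfl, rfl⟩
    · rintro s₁ s₂ rfl a s₂' h
      exact ⟨s₁, s₂', Relation.ReflTransGen.refl, Or.inl h, rfl, rfl⟩
  · rintro T₁ T₂ ⟨R, ⟨h1, h2⟩, hinit⟩
    refine ⟨fun s₂ s₁ => R s₁ s₂, ⟨?_, ?_⟩, hinit⟩
    · intro s₂ s₁ hr a s₂' htr
      exact h2 s₁ s₂ hr a s₂' htr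
    · intro s₂ s₁ hr a s₁' htr
      exact h1 s₁ s₂ hr a s₁' htr
  · rintro T₁ T₂ T₃ ⟨R₁, hR₁, hi₁⟩ ⟨R₂, hR₂, hi₂⟩
    refine ⟨fun s₁ s₃ => ∃ s₂, R₁ s₁ s₂ ∧ R₂ s₂ s₃, ⟨?_, ?_⟩, T₂.init, hi₁, hi₂⟩
    · rintro s₁ s₃ ⟨s₂, hr₁, hr₂⟩ a s₁' htr
      obtain ⟨s₂'', s₂', hstar, hstep, hra, hrb⟩ := hR₁.1 _ _ hr₁ _ _ htr
      obtain ⟨t₃, hstar₃, hrt⟩ := LTS.star_match_fwd hR₂ hstar _ hr₂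
      rcases hstep with h' | ⟨rfl, rfl⟩
      · obtain ⟨u'', u', hsu, hstep', hrc, hrd⟩ := hR₂.1 _ _ hrt _ _ h'
        exact ⟨u'', u', hstar₃.trans hsu, hstep', ⟨s₂'', hra, hrc⟩, ⟨s₂', hrb, hrd⟩⟩
      · exact ⟨t₃, t₃, hstar₃, Or.inr ⟨rfl, rfl⟩, ⟨s₂'', hra, hrt⟩, ⟨s₂'', hrb, hrt⟩⟩
    · rintro s₁ s₃ ⟨s₂, hr₁, hr₂⟩ a s₃' htr
      obtain ⟨s₂'', s₂', hstar, hstep, hra, hrb⟩ := hR₂.2 _ _ hr₂ _ _ htr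
      obtain ⟨t₁, hstar₁, hrt⟩ := LTS.star_match_bwd hR₁ hstar _ hr₁
      rcases hstep with h' | ⟨rfl, rfl⟩
      · obtain ⟨u'', u', hsu, hstep', hrc, hrd⟩ := hR₁.2 _ _ hrt _ _ h'
        exact ⟨u'', u', hstar₁.trans hsu, hstep', ⟨s₂'', hrc, hra⟩, ⟨s₂', hrd, hrb⟩⟩
      · exact ⟨t₁, t₁, hstar₁, Or.inr ⟨rfl, rfl⟩, ⟨s₂'', hrt, hra⟩, ⟨s₂'', hrt, hrb⟩⟩
end

section
/- Branching bisimilar labelled transition systems have the same sets of weak infinite traces from their initial states: if T₁ ≈_b T₂ then Tr_w^∞(↑₁) = Tr_w^∞(↑₂). -/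
namespace LTS

/-- `s ⟹σ`: the infinite sequence `σ` of (non-τ) actions is a weak infinite trace of `s`. -/
def WeakInfTrace {A : Type} (T : LTS A) (s : T.S) (σ : ℕ → A) : Prop :=
  ∃ p p' : ℕ → T.S, p 0 = s ∧ ∀ i, T.Star (p i) (p' i) ∧ T.tr (p' i) (some (σ i)) (p (i + 1))

end LTS

namespace LTS

variable {A : Type} {T₁ T₂ : LTS A} {R : T₁.S → T₂.S → Prop}

lemma isBB_flip (hbb : IsBB T₁ T₂ R) : IsBB T₂ T₁ (fun b a => R a b) :=
  ⟨fun s₂ s₁ hR a s₂' htr => hbb.2 s₁ s₂ hR a s₂' htr,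
   fun s₂ s₁ hR a s₁' htr => hbb.1 s₁ s₂ hR a s₁' htr⟩

lemma star_lift (hbb : IsBB T₁ T₂ R) {s₁ s₁' : T₁.S} {s₂ : T₂.S} (hR : R s₁ s₂)
    (hs : T₁.Star s₁ s₁') : ∃ s₂', T₂.Star s₂ s₂' ∧ R s₁' s₂' := by
  induction hs with
  | refl => exact ⟨s₂, Relation.ReflTransGen.refl, hR⟩
  | tail hab hbc ih =>
    obtain ⟨t, ht, hRt⟩ := ih
    obtain ⟨t'', t', h1, h2, _, h4⟩ := hbb.1 _ _ hRt none _ hbc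
    refine ⟨t', ht.trans (h1.trans ?_), h4⟩
    rcases h2 with h | ⟨_, rfl⟩
    · exact Relation.ReflTransGen.single h
    · exact Relation.ReflTransGen.refl

lemma step_lift (hbb : IsBB T₁ T₂ R) {s₁ s₁' s₁'' : T₁.S} {s₂ : T₂.S} {a : A} (hR : R s₁ s₂)
    (hs : T₁.Star s₁ s₁') (ht : T₁.tr s₁' (some a) s₁'') :
    ∃ t' t'', T₂.Star s₂ t' ∧ T₂.tr t' (some a) t'' ∧ R s₁'' t'' := by
  obtain ⟨t, hst, hRt⟩ := star_lift hbb hR hs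
  obtain ⟨t'', t', h1, h2, _, h4⟩ := hbb.1 _ _ hRt (some a) _ ht
  rcases h2 with h | ⟨h, _⟩
  · exact ⟨t'', t', hst.trans h1, h, h4⟩
  · simp at h

lemma trace_mono (hbb : IsBB T₁ T₂ R) {s : T₁.S} {t : T₂.S} {σ : ℕ → A} (hR : R s t)
    (h : WeakInfTrace T₁ s σ) : WeakInfTrace T₂ t σ := by
  obtain ⟨p, p', hp0, hstep⟩ := h
  have key : ∀ i (u : T₂.S), R (p i) u →
      ∃ v' v, T₂.Star u v' ∧ T₂.tr v' (some (σ i)) v ∧ R (p (i+1)) v :=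
    fun i u hu => step_lift hbb hu (hstep i).1 (hstep i).2
  let f : ∀ i, {u : T₂.S // R (p i) u} := fun i => Nat.rec ⟨t, hp0 ▸ hR⟩
    (fun i prev =>
      ⟨Classical.choose (Classical.choose_spec (key i prev.1 prev.2)),
       (Classical.choose_spec (Classical.choose_spec (key i prev.1 prev.2))).2.2⟩) i
  refine ⟨fun i => (f i).1, fun i => Classical.choose (key i (f i).1 (f i).2), rfl, fun i => ?_⟩
  have hspec := Classical.choose_spec (Classical.choose_spec (key i (f i).1 (f i).2))
  exact ⟨hspec.1, hspec.2.1⟩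

end LTS

theorem stmt_10 {A : Type} (T₁ T₂ : LTS A) (h : LTS.BBisim T₁ T₂) :
    ∀ σ : ℕ → A, LTS.WeakInfTrace T₁ T₁.init σ ↔ LTS.WeakInfTrace T₂ T₂.init σ := by
  obtain ⟨R, hbb, hR⟩ := h
  intro σ
  exact ⟨fun ht => LTS.trace_mono hbb hR ht,
         fun ht => LTS.trace_mono (LTS.isBB_flip hbb) hR ht⟩
end

section
/- For a deterministic ITM satisfying the interactiveness condition, every input-active computation has an infinite output stream; hence for every input stream x ∈ Σ^ω there is exactly one output stream y with (x, y) an interaction pair arising from an input-active computation, and the machine thus defines a total ω-translation. -/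
/-- Tape head movements. -/
inductive Move where
  | L : Move
  | R : Move

/-- A deterministic interactive Turing machine with states `Q` and tape alphabet `D`
(containing the blank symbol). In each step it reads an input symbol from
`Option Bool` (`none` = λ) and produces an output symbol in `Option Bool`. -/
structure ITM (Q D : Type) where
  blank : D
  δ : Q → D → Option Bool → Q × D × Move × Option Bool
  init : Q

namespace ITM

variable {Q D : Type}

/-- A configuration: state, left part of the tape (reversed), head symbol, right part. -/
def Conf (Q D : Type) : Type := Q × List D × D × List D

/-- One computation step on a configuration given an input symbol: the next
configuration together with the produced output symbol. -/
def step (M : ITM Q D) : Conf Q D → Option Bool → Conf Q D × Option Bool :=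
  fun c i =>
    let q := c.1
    let L' := c.2.1
    let d := c.2.2.1
    let R' := c.2.2.2
    let r := M.δ q d i
    let q' := r.1
    let e := r.2.1
    let o := r.2.2.2
    match r.2.2.1 with
    | Move.L =>
        match L' with
        | [] => ((q', ([], M.blank, e :: R')), o)
        | h :: t => ((q', (t, h, e :: R')), o)
    | Move.R =>
        match R' with
        | [] => ((q', (e :: L', M.blank, [])), o)
        | h :: t => ((q', (e :: L', h, t)), o)

/-- The initial configuration: initial state and everywhere-blank tape. -/
def initConf (M : ITM Q D) : Conf Q D := (M.init, [], M.blank, [])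

/-- The configuration reached after `n` steps of the computation on input sequence `i`. -/
def conf (M : ITM Q D) (i : ℕ → Option Bool) : ℕ → Conf Q D
  | 0 => M.initConf
  | n + 1 => (M.step (conf M i n) (i n)).1

/-- The output symbol produced at step `n` of the computation on input sequence `i`. -/
def outp (M : ITM Q D) (i : ℕ → Option Bool) (n : ℕ) : Option Bool :=
  (M.step (M.conf i n) (i n)).2

/-- The machine satisfies the interactiveness condition: in every computation, every
non-λ input is followed (at the same step or later) by a non-λ output. -/
def Interactiveness (M : ITM Q D) : Prop :=
  ∀ i : ℕ → Option Bool, ∀ k, i k ≠ none → ∃ l, k ≤ l ∧ M.outp i l ≠ none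

/-- The stream `y` is the sequence `o` with all occurrences of λ omitted. -/
def Spells (o : ℕ → Option Bool) (y : ℕ → Bool) : Prop :=
  ∃ φ : ℕ → ℕ, StrictMono φ ∧ (∀ n, o (φ n) = some (y n)) ∧
    ∀ m b, o m = some b → ∃ n, φ n = m

end ITM

open Classical in
lemma spells_unique {o : ℕ → Option Bool} {y y' : ℕ → Bool}
    (h : ITM.Spells o y) (h' : ITM.Spells o y') : y = y' := by
  obtain ⟨φ, hmono, h1, h2⟩ := h
  obtain ⟨φ', hmono', h1', h2'⟩ := h'
  have hrange : Set.range φ = Set.range φ' := by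
    ext m
    constructor
    · rintro ⟨n, rfl⟩
      obtain ⟨n', hn'⟩ := h2' (φ n) (y n) (h1 n)
      exact ⟨n', hn'⟩
    · rintro ⟨n, rfl⟩
      obtain ⟨n', hn'⟩ := h2 (φ' n) (y' n) (h1' n)
      exact ⟨n', hn'⟩
  have hφ : φ = φ' := (StrictMono.range_inj hmono hmono').1 hrange
  funext n
  have := h1 n
  rw [hφ, h1' n] at this
  exact (Option.some_inj.mp this).symm

open Classical in
lemma spells_exists {o : ℕ → Option Bool} (h : {k | o k ≠ none}.Infinite) :
    ∃ y : ℕ → Bool, ITM.Spells o y := by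
  set p : ℕ → Prop := fun k => o k ≠ none with hp
  refine ⟨fun n => (o (Nat.nth p n)).getD false, Nat.nth p, Nat.nth_strictMono h, ?_, ?_⟩
  · intro n
    have hpn : p (Nat.nth p n) := Nat.nth_mem_of_infinite h n
    cases hob : o (Nat.nth p n) with
    | none => exact absurd hob hpn
    | some b => simp [hob]
  · intro m b hb
    have hpm : p m := by simp [hp, hb]
    exact ⟨Nat.count p m, Nat.nth_count hpm⟩


/-- For a deterministic ITM satisfying the interactiveness condition, every input-active
computation has infinitely many non-λ outputs, and hence for every input stream `x`
there is exactly one output stream `y` such that `(x, y)` is the interaction pair of the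
input-active computation on `x`; thus the machine defines a total ω-translation. -/

theorem stmt_12 {Q D : Type} (M : ITM Q D) (hM : ITM.Interactiveness M) :
    (∀ x : ℕ → Bool, {k | M.outp (fun n => some (x n)) k ≠ none}.Infinite) ∧
    (∀ x : ℕ → Bool, ∃! y : ℕ → Bool, ITM.Spells (M.outp (fun n => some (x n))) y) ∧
    ∃ φ : (ℕ → Bool) → (ℕ → Bool), ∀ x : ℕ → Bool,
      ITM.Spells (M.outp (fun n => some (x n))) (φ x) := by
  have hinf : ∀ x : ℕ → Bool, {k | M.outp (fun n => some (x n)) k ≠ none}.Infinite := by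
    intro x
    apply Set.infinite_of_not_bddAbove
    rintro ⟨k, hk⟩
    obtain ⟨l, hkl, hl⟩ := hM (fun n => some (x n)) (k + 1) (by simp)
    have := hk hl
    omega
  refine ⟨hinf, fun x => ?_, ?_⟩
  · obtain ⟨y, hy⟩ := spells_exists (hinf x)
    exact ⟨y, hy, fun y' hy' => spells_unique hy' hy⟩
  · refine ⟨fun x => Classical.choose (spells_exists (hinf x)), fun x =>
      Classical.choose_spec (spells_exists (hinf x))⟩
end
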